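/- For every α > 0, the constants c₁(α) := χ_α'(1)·[2χ_α(1)(1−χ_α(1)) − (1−2χ_α(1))χ_α'(1)] / (4χ_α(1)²(1−χ_α(1))²) and c₂(α) := (1−2χ_α(1))·χ_α'(1)² / (4χ_α(1)²(1−χ_α(1))²) are both strictly positive. -/

import Mathlib

/-!
At `x = 1` the first argument of `χ_α` vanishes and the second is stationary, so
`χ_α(1) = 1/2 - e^{α²/2} N(-α)` and `χ_α'(1) = α / √(2π)`. Writing `B = 1 - 2 χ_α(1)` and
`d = χ_α'(1)`, positivity of `c₂` is `B > 0`, and positivity of `c₁` is `B² + 2 B d < 1`, i.e.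
`B < √(d² + 1) - d`: the strict Komatsu–Pollak bound.

That bound says `h(x) = u(x) e^{-x²/2} - ∫_x^∞ e^{-t²/2} dt > 0` for `x > 0`, where
`u(x) = (√(x² + 2π) - x) / 2`. Now `h(0) = 0`, `h → 0` at `∞`, and
`h' = e^{-x²/2} (u' - x u + 1)` has the sign of `2π - 4π(π - 2) x² - 2(π - 2) x⁴`, which changes
sign exactly once on `(0, ∞)`; so `h` increases and then decreases towards `0`.
-/

open Real Filter Set

noncomputable def stdNormalCDF (x : ℝ) : ℝ :=
  (Real.sqrt (2 * Real.pi))⁻¹ * ∫ t in Set.Iic x, Real.exp (-t ^ 2 / 2)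

noncomputable def chi (α x : ℝ) : ℝ :=
  stdNormalCDF (α / 2 * (x - 1 / x)) -
    Real.exp (α ^ 2 / 2) * stdNormalCDF (-(α / 2) * (x + 1 / x))

open MeasureTheory Topology

theorem hasDerivAt_integral_Ioi {f : ℝ → ℝ} (hf : Integrable f) (hc : Continuous f) (x : ℝ) :
    HasDerivAt (fun y => ∫ t in Ioi y, f t) (-f x) x := by
  have hsplit : (fun y => ∫ t in Ioi y, f t) =
      fun y => (∫ t in Ioi 0, f t) - ∫ t in (0 : ℝ)..y, f t :=
    funext fun y => by
      linarith [intervalIntegral.integral_Ioi_sub_Ioi' (a := 0) (b := y) hf.integrableOn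
        hf.integrableOn]
  rw [hsplit]
  exact (intervalIntegral.integral_hasDerivAt_right hf.intervalIntegrable
    (hc.stronglyMeasurableAtFilter _ _) hc.continuousAt).const_sub _

theorem pos_of_deriv_pos_of_deriv_neg {f : ℝ → ℝ} {a b : ℝ} (hab : a ≤ b)
    (hf : Differentiable ℝ f) (hpos : ∀ x ∈ Ioo a b, 0 < deriv f x)
    (hneg : ∀ x ∈ Ioi b, deriv f x < 0) (ha : f a = 0) (hlim : Tendsto f atTop (𝓝 0))
    {x : ℝ} (hx : a < x) : 0 < f x := by
  have hmono : StrictMonoOn f (Icc a b) :=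
    strictMonoOn_of_deriv_pos (convex_Icc a b) hf.continuous.continuousOn
      (by simpa only [interior_Icc] using hpos)
  have hanti : StrictAntiOn f (Ici b) :=
    strictAntiOn_of_deriv_neg (convex_Ici b) hf.continuous.continuousOn
      (by simpa only [interior_Ici] using hneg)
  rcases le_or_gt x b with hxb | hbx
  · exact ha ▸ hmono ⟨le_rfl, hab⟩ ⟨hx.le, hxb⟩ hx
  · have hnext : 0 ≤ f (x + 1) := le_of_tendsto hlim <| by
      filter_upwards [eventually_gt_atTop (x + 1)] with z hz
      exact (hanti (by simp only [mem_Ici]; linarith) (by simp only [mem_Ici]; linarith) hz).le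
    linarith [hanti hbx.le (show b ≤ x + 1 by linarith) (lt_add_one x)]

theorem integrable_exp_neg_sq_div_two : Integrable fun t : ℝ => exp (-t ^ 2 / 2) := by
  convert integrable_exp_neg_mul_sq (b := 1 / 2) (by norm_num) using 3 with t
  ring

noncomputable def gaussTail (x : ℝ) : ℝ := ∫ t in Ioi x, exp (-t ^ 2 / 2)

theorem gaussTail_zero : gaussTail 0 = √(2 * π) / 2 := by
  rw [gaussTail]
  convert integral_gaussian_Ioi (1 / 2) using 3 with t
  · ring_nf
  · field_simp

theorem gaussTail_pos (x : ℝ) : 0 < gaussTail x := by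
  rw [gaussTail, setIntegral_pos_iff_support_of_nonneg_ae
    (ae_of_all _ fun t => (exp_pos _).le) integrable_exp_neg_sq_div_two.integrableOn]
  simp [Function.support, (exp_pos _).ne']

theorem hasDerivAt_gaussTail (x : ℝ) : HasDerivAt gaussTail (-exp (-x ^ 2 / 2)) x :=
  hasDerivAt_integral_Ioi integrable_exp_neg_sq_div_two (by fun_prop) x

theorem tendsto_gaussTail_atTop : Tendsto gaussTail atTop (𝓝 0) :=
  tendsto_integral_Ioi_zero tendsto_id

theorem stdNormalCDF_neg (x : ℝ) : stdNormalCDF (-x) = gaussTail x / √(2 * π) := by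
  rw [stdNormalCDF, gaussTail, ← neg_neg x, ← integral_comp_neg_Ioi]
  simp [div_eq_inv_mul]

theorem stdNormalCDF_zero : stdNormalCDF 0 = 1 / 2 := by
  rw [← neg_zero, stdNormalCDF_neg, gaussTail_zero]
  field_simp

theorem hasDerivAt_stdNormalCDF (x : ℝ) :
    HasDerivAt stdNormalCDF (exp (-x ^ 2 / 2) / √(2 * π)) x := by
  have h := ((hasDerivAt_gaussTail (-x)).comp x (hasDerivAt_neg x)).div_const √(2 * π)
  have heq : stdNormalCDF = fun y => gaussTail (-y) / √(2 * π) :=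
    funext fun y => by rw [← stdNormalCDF_neg, neg_neg]
  rw [heq]
  simpa using h

noncomputable def pollakBound (x : ℝ) : ℝ := (√(x ^ 2 + 2 * π) - x) / 2

noncomputable def pollakGap (x : ℝ) : ℝ := pollakBound x * exp (-x ^ 2 / 2) - gaussTail x

noncomputable def pollakQuartic (x : ℝ) : ℝ :=
  2 * π - 4 * π * (π - 2) * x ^ 2 - 2 * (π - 2) * x ^ 4

theorem hasDerivAt_pollakBound (x : ℝ) :
    HasDerivAt pollakBound ((x / √(x ^ 2 + 2 * π) - 1) / 2) x := by
  have hs : HasDerivAt (fun y => √(y ^ 2 + 2 * π)) (x / √(x ^ 2 + 2 * π)) x := by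
    convert ((hasDerivAt_pow 2 x).add_const (2 * π)).sqrt (by positivity) using 1
    field_simp
    simp [mul_comm]
  exact (hs.sub (hasDerivAt_id x)).div_const 2

theorem hasDerivAt_pollakGap (x : ℝ) :
    HasDerivAt pollakGap
      (exp (-x ^ 2 / 2) * ((x / √(x ^ 2 + 2 * π) - 1) / 2 - x * pollakBound x + 1)) x := by
  have hq : HasDerivAt (fun y : ℝ => -y ^ 2 / 2) (-x) x :=
    ((hasDerivAt_pow 2 x).fun_neg.div_const 2).congr_deriv (by norm_num; ring)
  have hg : HasDerivAt (fun y => exp (-y ^ 2 / 2)) (-x * exp (-x ^ 2 / 2)) x := by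
    simpa only [mul_comm] using hq.exp
  refine (((hasDerivAt_pollakBound x).mul hg).sub (hasDerivAt_gaussTail x)).congr_deriv ?_
  ring

theorem pollakBound_defect_eq {x : ℝ} (hx : 0 ≤ x) :
    (x / √(x ^ 2 + 2 * π) - 1) / 2 - x * pollakBound x + 1 =
      pollakQuartic x / (2 * √(x ^ 2 + 2 * π) *
        (√(x ^ 2 + 2 * π) * (1 + x ^ 2) + x * (x ^ 2 + 2 * π - 1))) := by
  set s := √(x ^ 2 + 2 * π)
  have hs : 0 < s := by positivity
  have hs2 : s ^ 2 = x ^ 2 + 2 * π := sq_sqrt (by positivity)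
  have hB : 0 ≤ x * (x ^ 2 + 2 * π - 1) := mul_nonneg hx (by nlinarith [pi_gt_three])
  have hP : 2 * s * ((x / s - 1) / 2 - x * pollakBound x + 1) =
      s * (1 + x ^ 2) - x * (x ^ 2 + 2 * π - 1) := by
    rw [pollakBound]
    field_simp
    linear_combination (-x) * hs2
  have hD : (s * (1 + x ^ 2) - x * (x ^ 2 + 2 * π - 1)) *
      (s * (1 + x ^ 2) + x * (x ^ 2 + 2 * π - 1)) = pollakQuartic x := by
    rw [pollakQuartic]
    linear_combination (1 + x ^ 2) ^ 2 * hs2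
  rw [eq_div_iff (by positivity), ← hD, ← hP]
  ring

theorem strictAntiOn_pollakQuartic : StrictAntiOn pollakQuartic (Ici 0) := by
  intro a ha b _ hab
  have ha : 0 ≤ a := ha
  have hsq : a ^ 2 < b ^ 2 := by nlinarith
  have hpi : 0 < π - 2 := by linarith [pi_gt_three]
  rw [pollakQuartic, pollakQuartic]
  nlinarith [mul_pos (mul_pos pi_pos hpi) (sub_pos.2 hsq),
    mul_pos hpi (sub_pos.2 (pow_lt_pow_left₀ hsq (sq_nonneg a) two_ne_zero))]

theorem exists_pollakQuartic_sign_change : ∃ x₀, 0 ≤ x₀ ∧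
    (∀ x ∈ Ioo 0 x₀, 0 < pollakQuartic x) ∧ ∀ x ∈ Ioi x₀, pollakQuartic x < 0 := by
  have hpi := pi_gt_three
  have hsign : pollakQuartic 2 ≤ 0 ∧ 0 ≤ pollakQuartic 0 := by
    constructor <;> (rw [pollakQuartic]; nlinarith)
  obtain ⟨x₀, ⟨hx₀, -⟩, hroot⟩ := intermediate_value_Icc' zero_le_two
    (by unfold pollakQuartic; fun_prop : Continuous pollakQuartic).continuousOn hsign
  refine ⟨x₀, hx₀, fun x hx => ?_, fun x hx => ?_⟩
  · exact hroot ▸ strictAntiOn_pollakQuartic (mem_Ici.2 hx.1.le) (mem_Ici.2 hx₀) hx.2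
  · exact hroot ▸ strictAntiOn_pollakQuartic (mem_Ici.2 hx₀) (mem_Ici.2 (hx₀.trans hx.le)) hx

theorem pollakBound_eq (x : ℝ) : pollakBound x = π / (√(x ^ 2 + 2 * π) + x) := by
  have hs2 : √(x ^ 2 + 2 * π) ^ 2 = x ^ 2 + 2 * π := sq_sqrt (by positivity)
  have habs : |x| < √(x ^ 2 + 2 * π) := by
    rw [← sqrt_sq_eq_abs]
    exact sqrt_lt_sqrt (sq_nonneg x) (by linarith [pi_pos])
  have hpos : 0 < √(x ^ 2 + 2 * π) + x := by linarith [neg_abs_le x]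
  rw [pollakBound, eq_div_iff hpos.ne']
  linear_combination hs2 / 2

theorem tendsto_pollakGap_atTop : Tendsto pollakGap atTop (𝓝 0) := by
  have hu : Tendsto pollakBound atTop (𝓝 0) := by
    rw [funext pollakBound_eq]
    exact tendsto_const_nhds.div_atTop
      (Tendsto.nonneg_add_atTop (fun x => sqrt_nonneg _) tendsto_id)
  have hg : Tendsto (fun x : ℝ => exp (-x ^ 2 / 2)) atTop (𝓝 0) :=
    tendsto_exp_atBot.comp
      ((tendsto_neg_atTop_atBot.comp (tendsto_pow_atTop two_ne_zero)).atBot_div_const two_pos)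
  have h := (hu.mul hg).sub tendsto_gaussTail_atTop
  rwa [mul_zero, sub_zero] at h

theorem pollakGap_zero : pollakGap 0 = 0 := by
  simp [pollakGap, pollakBound, gaussTail_zero]

theorem pollakGap_pos {x : ℝ} (hx : 0 < x) : 0 < pollakGap x := by
  obtain ⟨x₀, hx₀, hpos, hneg⟩ := exists_pollakQuartic_sign_change
  have hderiv {y : ℝ} (hy : 0 ≤ y) : deriv pollakGap y = exp (-y ^ 2 / 2) /
      (2 * √(y ^ 2 + 2 * π) * (√(y ^ 2 + 2 * π) * (1 + y ^ 2) + y * (y ^ 2 + 2 * π - 1))) *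
      pollakQuartic y := by
    rw [(hasDerivAt_pollakGap y).deriv, pollakBound_defect_eq hy, mul_div_assoc',
      div_mul_eq_mul_div]
  have hfactor {y : ℝ} (hy : 0 ≤ y) : 0 < exp (-y ^ 2 / 2) /
      (2 * √(y ^ 2 + 2 * π) * (√(y ^ 2 + 2 * π) * (1 + y ^ 2) + y * (y ^ 2 + 2 * π - 1))) := by
    have : 0 ≤ y * (y ^ 2 + 2 * π - 1) := mul_nonneg hy (by nlinarith [pi_gt_three])
    positivity
  refine pos_of_deriv_pos_of_deriv_neg hx₀ (fun y => (hasDerivAt_pollakGap y).differentiableAt)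
    (fun y hy => ?_) (fun y hy => ?_) pollakGap_zero tendsto_pollakGap_atTop hx
  · rw [hderiv hy.1.le]
    exact mul_pos (hfactor hy.1.le) (hpos y hy)
  · have hy0 : 0 ≤ y := hx₀.trans (le_of_lt hy)
    rw [hderiv hy0]
    exact mul_neg_of_pos_of_neg (hfactor hy0) (hneg y hy)

theorem exp_mul_gaussTail_lt_pollakBound {x : ℝ} (hx : 0 < x) :
    exp (x ^ 2 / 2) * gaussTail x < pollakBound x := by
  have h := mul_lt_mul_of_pos_left (sub_pos.1 (pollakGap_pos hx)) (exp_pos (x ^ 2 / 2))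
  rwa [mul_left_comm, ← exp_add, show x ^ 2 / 2 + -x ^ 2 / 2 = 0 by ring, exp_zero,
    mul_one] at h

theorem stdNormalCDF_pos (x : ℝ) : 0 < stdNormalCDF x := by
  rw [← neg_neg x, stdNormalCDF_neg]
  exact div_pos (gaussTail_pos _) (by positivity)

theorem two_mul_exp_mul_stdNormalCDF_neg_lt {α : ℝ} (hα : 0 < α) :
    2 * (exp (α ^ 2 / 2) * stdNormalCDF (-α)) < √(α ^ 2 / (2 * π) + 1) - α / √(2 * π) := by
  have hsqrt : √(α ^ 2 / (2 * π) + 1) = √(α ^ 2 + 2 * π) / √(2 * π) := by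
    rw [← sqrt_div (by positivity)]
    congr 1
    field_simp
  calc 2 * (exp (α ^ 2 / 2) * stdNormalCDF (-α))
      = 2 * (exp (α ^ 2 / 2) * gaussTail α) / √(2 * π) := by rw [stdNormalCDF_neg]; ring
    _ < 2 * pollakBound α / √(2 * π) := by gcongr; exact exp_mul_gaussTail_lt_pollakBound hα
    _ = √(α ^ 2 / (2 * π) + 1) - α / √(2 * π) := by rw [pollakBound, hsqrt]; ring

theorem chi_one (α : ℝ) : chi α 1 = 1 / 2 - exp (α ^ 2 / 2) * stdNormalCDF (-α) := by
  rw [chi, show α / 2 * (1 - 1 / 1) = 0 by ring, show -(α / 2) * (1 + 1 / 1) = -α by ring,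
    stdNormalCDF_zero]

theorem hasDerivAt_chi_one (α : ℝ) : HasDerivAt (chi α) (α / √(2 * π)) 1 := by
  have hinv : HasDerivAt (fun x : ℝ => 1 / x) (-1) 1 := by
    simpa using hasDerivAt_inv (one_ne_zero : (1 : ℝ) ≠ 0)
  have h₁ := (hasDerivAt_stdNormalCDF _).comp 1 (((hasDerivAt_id 1).sub hinv).const_mul (α / 2))
  have h₂ :=
    (hasDerivAt_stdNormalCDF _).comp 1 (((hasDerivAt_id 1).add hinv).const_mul (-(α / 2)))
  refine (h₁.sub (h₂.const_mul (exp (α ^ 2 / 2)))).congr_deriv ?_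
  norm_num
  ring

theorem c1_c2_pos_of_lt_sqrt {x d : ℝ} (hd : 0 < d) (hx : 0 < 1 - 2 * x)
    (hbound : 1 - 2 * x < √(d ^ 2 + 1) - d) :
    0 < d * (2 * x * (1 - x) - (1 - 2 * x) * d) / (4 * x ^ 2 * (1 - x) ^ 2) ∧
      0 < (1 - 2 * x) * d ^ 2 / (4 * x ^ 2 * (1 - x) ^ 2) := by
  have hsqrt_le : √(d ^ 2 + 1) ≤ d + 1 := sqrt_le_iff.2 ⟨by linarith, by nlinarith⟩
  have hx0 : 0 < x := by linarith
  have hden : 0 < 4 * x ^ 2 * (1 - x) ^ 2 := by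
    have : 0 < 1 - x := by linarith
    positivity
  refine ⟨div_pos (mul_pos hd ?_) hden, by positivity⟩
  have hsq : (1 - 2 * x + d) ^ 2 < d ^ 2 + 1 := by
    have := sq_sqrt (show (0 : ℝ) ≤ d ^ 2 + 1 by positivity)
    nlinarith
  nlinarith

theorem c1_c2_pos (α : ℝ) (hα : 0 < α) :
    0 < deriv (chi α) 1 *
          (2 * chi α 1 * (1 - chi α 1) - (1 - 2 * chi α 1) * deriv (chi α) 1) /
        (4 * chi α 1 ^ 2 * (1 - chi α 1) ^ 2) ∧
      0 < (1 - 2 * chi α 1) * deriv (chi α) 1 ^ 2 /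
        (4 * chi α 1 ^ 2 * (1 - chi α 1) ^ 2) := by
  have hmills : 0 < exp (α ^ 2 / 2) * stdNormalCDF (-α) :=
    mul_pos (exp_pos _) (stdNormalCDF_pos _)
  have hKP := two_mul_exp_mul_stdNormalCDF_neg_lt hα
  rw [(hasDerivAt_chi_one α).deriv]
  refine c1_c2_pos_of_lt_sqrt (by positivity) ?_ ?_ <;> rw [chi_one]
  · linarith
  · rw [div_pow, sq_sqrt (by positivity)]
    linarith
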